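/- arXiv:math/0607026 — 2 statements merged into one kernel-verified Lean document; each statement's English description precedes it below -/
import Mathlib

section
/- Let f1, f2, f3 : [-π, π] → ℝ be measurable functions with 0 < c ≤ f_i(θ) ≤ C almost everywhere for some constants c, C (i = 1, 2, 3). Then the function τ ↦ δ(f1, f2^{1−τ} f3^{τ}) is convex on [0, 1]. -/
open MeasureTheory Real Set

/-- `δ_{a/g}(f1, f2)`: the logarithm of the ratio of the arithmetic mean over the
geometric mean of `f1/f2` on `[-π, π]` (w.r.t. normalized Lebesgue measure `dθ/2π`). -/
noncomputable def deltaAG (f1 f2 : ℝ → ℝ) : ℝ :=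
  Real.log ((2 * π)⁻¹ * ∫ θ in Icc (-π) π, f1 θ / f2 θ) -
    (2 * π)⁻¹ * ∫ θ in Icc (-π) π, Real.log (f1 θ / f2 θ)

/-- The symmetrized distance `δ(f1, f2) := δ_{a/g}(f1, f2) + δ_{a/g}(f2, f1)`. -/
noncomputable def deltaSym (f1 f2 : ℝ → ℝ) : ℝ :=
  deltaAG f1 f2 + deltaAG f2 f1

/-! The geometric-mean terms of `δ(f1, f_τ)` cancel, leaving
`log ⨍ f1 / f_τ + log ⨍ f_τ / f1`. Since `f_τ = f2 · exp (τ u)` with `u = log f3 - log f2`,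
each term is the cumulant generating function of `∓u` under the finite measure with density
`f1 / (2π f2)` resp. `f2 / (2π f1)` on `[-π, π]`, and a cumulant generating function is convex:
its second derivative is the variance of the variable under the exponentially tilted measure. -/

open ProbabilityTheory

theorem ProbabilityTheory.convexOn_cgf {Ω : Type*} [MeasurableSpace Ω] {X : Ω → ℝ}
    {μ : Measure Ω} : ConvexOn ℝ (interior (integrableExpSet X μ)) (cgf X μ) := by
  refine convexOn_of_deriv2_nonneg' convex_integrableExpSet.interior
    analyticOnNhd_cgf.differentiableOn analyticOnNhd_cgf.deriv.differentiableOn fun v hv ↦ ?_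
  rw [← iteratedDeriv_eq_iterate, iteratedDeriv_two_cgf_eq_integral hv]
  exact div_nonneg (integral_nonneg fun ω ↦ by positivity) mgf_nonneg

section WeightedLaplace

variable {α : Type*} [MeasurableSpace α] {μ : Measure α} {h u : α → ℝ}

theorem convexOn_log_integral_mul_exp (hh : AEMeasurable h μ) (hh₀ : 0 ≤ᵐ[μ] h)
    (hint : ∀ t, Integrable (fun x ↦ h x * exp (t * u x)) μ) :
    ConvexOn ℝ univ (fun t ↦ log (∫ x, h x * exp (t * u x) ∂μ)) := by
  set ν := μ.withDensity fun x ↦ ENNReal.ofReal (h x)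
  have hdens : ∀ g : α → ℝ,
      (fun x ↦ (ENNReal.ofReal (h x)).toReal • g x) =ᵐ[μ] fun x ↦ h x * g x := by
    intro g
    filter_upwards [hh₀] with x hx
    rw [ENNReal.toReal_ofReal hx, smul_eq_mul]
  have hexpSet : integrableExpSet u ν = univ := eq_univ_of_forall fun t ↦
    (integrable_withDensity_iff_integrable_smul₀' hh.ennreal_ofReal
      (ae_of_all _ fun _ ↦ ENNReal.ofReal_lt_top)).2 ((hint t).congr (hdens _).symm)
  have hcgf : cgf u ν = fun t ↦ log (∫ x, h x * exp (t * u x) ∂μ) := by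
    ext t
    rw [cgf, mgf, integral_withDensity_eq_integral_toReal_smul₀ hh.ennreal_ofReal
      (ae_of_all _ fun _ ↦ ENNReal.ofReal_lt_top), integral_congr_ae (hdens _)]
  simpa only [hexpSet, interior_univ, hcgf] using convexOn_cgf (X := u) (μ := ν)

theorem integrable_mul_exp_mul_of_abs_le [IsFiniteMeasure μ] (hh : AEStronglyMeasurable h μ)
    (hu : AEStronglyMeasurable u μ) {M B : ℝ} (hM : ∀ᵐ x ∂μ, |h x| ≤ M)
    (hB : ∀ᵐ x ∂μ, |u x| ≤ B) (t : ℝ) : Integrable (fun x ↦ h x * exp (t * u x)) μ := by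
  refine .of_bound (hh.mul (by fun_prop)) (M * exp (|t| * B)) ?_
  filter_upwards [hM, hB] with x hMx hBx
  rw [norm_mul, norm_eq_abs, norm_of_nonneg (exp_pos _).le]
  have hexp : t * u x ≤ |t| * B := (le_abs_self _).trans (by rw [abs_mul]; gcongr)
  exact mul_le_mul hMx (exp_le_exp.2 hexp) (exp_pos _).le ((abs_nonneg _).trans hMx)

end WeightedLaplace

theorem Real.rpow_one_sub_mul_rpow_eq_mul_exp {a b : ℝ} (ha : 0 < a) (hb : 0 < b) (τ : ℝ) :
    a ^ (1 - τ) * b ^ τ = a * exp (τ * (log b - log a)) := by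
  rw [rpow_def_of_pos ha, rpow_def_of_pos hb, ← exp_add]
  conv_rhs => arg 1; rw [← exp_log ha]
  rw [← exp_add]
  ring_nf

theorem Real.abs_log_sub_log_le {c C x y : ℝ} (hc : 0 < c) (hx : x ∈ Icc c C)
    (hy : y ∈ Icc c C) : |log x - log y| ≤ log C - log c := by
  have hx₀ : 0 < x := hc.trans_le hx.1
  have hy₀ : 0 < y := hc.trans_le hy.1
  rw [abs_sub_le_iff]
  constructor <;>
    linarith [log_le_log hc hx.1, log_le_log hx₀ hx.2, log_le_log hc hy.1, log_le_log hy₀ hy.2]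

theorem deltaSym_eq_log_add_log (f g : ℝ → ℝ) :
    deltaSym f g = log ((2 * π)⁻¹ * ∫ θ in Icc (-π) π, f θ / g θ) +
      log ((2 * π)⁻¹ * ∫ θ in Icc (-π) π, g θ / f θ) := by
  have hlog : ∀ θ, log (g θ / f θ) = -log (f θ / g θ) := fun θ ↦ by
    rw [← log_inv, inv_div]
  simp only [deltaSym, deltaAG, hlog, integral_neg]
  ring

theorem convexOn_log_mean_div_mul_exp {f g u : ℝ → ℝ} {c C B : ℝ} (hc : 0 < c)
    (hfm : Measurable f) (hgm : Measurable g) (hum : Measurable u)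
    (hf : ∀ᵐ θ ∂(volume.restrict (Icc (-π) π)), c ≤ f θ ∧ f θ ≤ C)
    (hg : ∀ᵐ θ ∂(volume.restrict (Icc (-π) π)), c ≤ g θ ∧ g θ ≤ C)
    (hu : ∀ᵐ θ ∂(volume.restrict (Icc (-π) π)), |u θ| ≤ B) :
    ConvexOn ℝ univ
      (fun τ ↦ log ((2 * π)⁻¹ * ∫ θ in Icc (-π) π, f θ / g θ * exp (τ * u θ))) := by
  have hbound : ∀ᵐ θ ∂(volume.restrict (Icc (-π) π)),
      0 ≤ (2 * π)⁻¹ * (f θ / g θ) ∧ (2 * π)⁻¹ * (f θ / g θ) ≤ (2 * π)⁻¹ * (C / c) := by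
    filter_upwards [hf, hg] with θ hfθ hgθ
    have hf₀ : 0 < f θ := hc.trans_le hfθ.1
    have hg₀ : 0 < g θ := hc.trans_le hgθ.1
    refine ⟨by positivity, ?_⟩
    gcongr (2 * π)⁻¹ * ?_
    exact div_le_div₀ (hf₀.le.trans hfθ.2) hfθ.2 hc hgθ.1
  have hm : Measurable fun θ ↦ (2 * π)⁻¹ * (f θ / g θ) := (hfm.div hgm).const_mul _
  simp_rw [← integral_const_mul, ← mul_assoc]
  exact convexOn_log_integral_mul_exp hm.aemeasurable (hbound.mono fun _ h ↦ h.1) fun t ↦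
    integrable_mul_exp_mul_of_abs_le hm.aestronglyMeasurable hum.aestronglyMeasurable
      (hbound.mono fun _ h ↦ (abs_of_nonneg h.1).trans_le h.2) hu t

/-- `τ ↦ δ(f1, f2^{1-τ} f3^{τ})` is convex on `[0, 1]`. -/
theorem deltaSym_convexOn (f1 f2 f3 : ℝ → ℝ) (c C : ℝ) (hc : 0 < c)
    (hm1 : Measurable f1) (hm2 : Measurable f2) (hm3 : Measurable f3)
    (hf1 : ∀ᵐ θ ∂(volume.restrict (Icc (-π) π)), c ≤ f1 θ ∧ f1 θ ≤ C)
    (hf2 : ∀ᵐ θ ∂(volume.restrict (Icc (-π) π)), c ≤ f2 θ ∧ f2 θ ≤ C)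
    (hf3 : ∀ᵐ θ ∂(volume.restrict (Icc (-π) π)), c ≤ f3 θ ∧ f3 θ ≤ C) :
    ConvexOn ℝ (Icc (0 : ℝ) 1)
      (fun τ => deltaSym f1 (fun θ => f2 θ ^ (1 - τ) * f3 θ ^ τ)) := by
  set u : ℝ → ℝ := fun θ ↦ log (f3 θ) - log (f2 θ)
  have hum : Measurable u := by fun_prop
  have hu : ∀ᵐ θ ∂(volume.restrict (Icc (-π) π)), |u θ| ≤ log C - log c := by
    filter_upwards [hf2, hf3] with θ h2 h3 using abs_log_sub_log_le hc h3 h2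
  have hconv₁ := convexOn_log_mean_div_mul_exp hc hm1 hm2 hum.neg hf1 hf2
    (hu.mono fun θ h ↦ by rwa [Pi.neg_apply, abs_neg])
  have hconv₂ := convexOn_log_mean_div_mul_exp hc hm2 hm1 hum hf2 hf1 hu
  refine ((hconv₁.add hconv₂).subset (subset_univ _) (convex_Icc 0 1)).congr fun τ _ ↦ ?_
  simp only [Pi.add_apply, Pi.neg_apply, u, deltaSym_eq_log_add_log]
  congr 3 <;> refine integral_congr_ae ?_ <;> filter_upwards [hf1, hf2, hf3] with θ h1 h2 h3
  all_goals rw [rpow_one_sub_mul_rpow_eq_mul_exp (hc.trans_le h2.1) (hc.trans_le h3.1)]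
  · rw [mul_neg, exp_neg]
    field_simp
  · field_simp
end

section
/- Let f, Δ : [-π, π] → ℝ be measurable with 0 < c ≤ f(θ) ≤ C and |Δ(θ)| ≤ C almost everywhere for some constants c, C. Set Q := (1/2π)∫_{-π}^{π} (Δ(θ)/f(θ))² dθ − ((1/2π)∫_{-π}^{π} Δ(θ)/f(θ) dθ)². Then there exist constants K > 0 and t0 > 0 such that for all real t with |t| ≤ t0 one has |δ_{a/g}(f, f + tΔ) − (t²/2)·Q| ≤ K·|t|³; that is, δ_{a/g}(f, f + tΔ) = (t²/2)·Q + O(|t|³) as t → 0. -/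
/-!
With `g = Δ / f` one has `f / (f + tΔ) = (1 + t g)⁻¹`, so for the uniform probability measure
on `[-π, π]`, `δ_{a/g}(f, f + tΔ) = log 𝔼[(1 + t g)⁻¹] + 𝔼[log (1 + t g)]`. Because `g` is
bounded, the expansions `(1 + x)⁻¹ = 1 - x + x² + O(x³)` and `log (1 + x) = x - x²/2 + O(x³)`
hold uniformly along `x = t g`, so both means are quadratic in `t` up to `O(t³)`. Expanding the
outer logarithm once more, the linear terms cancel and what is left at order `t²` is
`t²/2 · (𝔼[g²] - 𝔼[g]²) = t²/2 · Q`.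
-/

open MeasureTheory Real Set

open Filter Asymptotics Topology
open scoped ProbabilityTheory

theorem isBigO_pow_of_abs_le {φ : ℝ → ℝ} {K r : ℝ} (hr : 0 < r) {n : ℕ}
    (h : ∀ x : ℝ, |x| ≤ r → |φ x| ≤ K * |x| ^ n) : φ =O[𝓝 0] (· ^ n) := by
  refine IsBigO.of_bound K ?_
  filter_upwards [Metric.closedBall_mem_nhds (0 : ℝ) hr] with x hx
  rw [Metric.mem_closedBall, dist_zero_right, norm_eq_abs] at hx
  simpa only [norm_eq_abs, abs_pow] using h x hx

theorem exists_abs_le_mul_pow_of_isBigO {F : ℝ → ℝ} {n : ℕ} (h : F =O[𝓝 0] (· ^ n)) :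
    ∃ K > (0 : ℝ), ∃ t₀ > (0 : ℝ), ∀ t : ℝ, |t| ≤ t₀ → |F t| ≤ K * |t| ^ n := by
  obtain ⟨K, hK, hKF⟩ := h.exists_pos
  obtain ⟨δ, hδ, hδF⟩ := Metric.eventually_nhds_iff.1 hKF.bound
  refine ⟨K, hK, δ / 2, half_pos hδ, fun t ht => ?_⟩
  have := hδF (show dist t 0 < δ by rw [dist_zero_right, norm_eq_abs]; linarith)
  simpa only [norm_eq_abs, abs_pow] using this

theorem isBigO_inv_one_add_sub :
    (fun x : ℝ => (1 + x)⁻¹ - (1 - x + x ^ 2)) =O[𝓝 0] (· ^ 3) := by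
  refine isBigO_pow_of_abs_le (K := 2) (r := 1 / 2) (by norm_num) fun x hx => ?_
  have hhalf : 1 / 2 ≤ 1 + x := by linarith [neg_abs_le x]
  have habs : 1 / 2 ≤ |1 + x| := hhalf.trans (le_abs_self _)
  have key : (1 + x)⁻¹ - (1 - x + x ^ 2) = -x ^ 3 / (1 + x) := by
    field_simp
    ring
  rw [key, abs_div, abs_neg, abs_pow, div_le_iff₀ (by positivity)]
  nlinarith [pow_nonneg (abs_nonneg x) 3]

theorem isBigO_log_one_add_sub :
    (fun x : ℝ => log (1 + x) - (x - x ^ 2 / 2)) =O[𝓝 0] (· ^ 3) := by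
  refine isBigO_pow_of_abs_le (K := 2) (r := 1 / 2) (by norm_num) fun x hx => ?_
  have taylor := abs_log_sub_add_sum_range_le (x := -x) (by rw [abs_neg]; linarith) 2
  have tail : |-x| ^ 3 / (1 - |-x|) ≤ 2 * |x| ^ 3 := by
    rw [abs_neg, div_le_iff₀ (by linarith)]
    nlinarith [pow_nonneg (abs_nonneg x) 3]
  refine le_trans (le_of_eq ?_) (taylor.trans tail)
  congr 1
  simp only [Finset.sum_range_succ, Finset.sum_range_zero, sub_neg_eq_add]
  push_cast
  ring

theorem isBigO_log_add_sub_of_isBigO {A L : ℝ → ℝ} {m₁ m₂ : ℝ}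
    (hA : (fun t => A t - (1 - t * m₁ + t ^ 2 * m₂)) =O[𝓝 0] (· ^ 3))
    (hL : (fun t => L t - (t * m₁ - t ^ 2 * m₂ / 2)) =O[𝓝 0] (· ^ 3)) :
    (fun t => log (A t) + L t - t ^ 2 / 2 * (m₂ - m₁ ^ 2)) =O[𝓝 0] (· ^ 3) := by
  have h32 : (fun t : ℝ => t ^ 3) =O[𝓝 0] (· ^ 2) := (isLittleO_pow_pow (by norm_num)).isBigO
  have h21 : (fun t : ℝ => t ^ 2) =O[𝓝 0] (· ^ 1) := (isLittleO_pow_pow (by norm_num)).isBigO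
  have hsum : (fun t => (A t - 1) + t * m₁) =O[𝓝 0] (· ^ 2) :=
    (((isBigO_refl (fun t : ℝ => t ^ 2) _).const_mul_left m₂).add (hA.trans h32)).congr_left
      fun t => by ring
  have hdiff : (fun t => (A t - 1) - t * m₁) =O[𝓝 0] (· ^ 1) :=
    ((hsum.trans h21).sub ((isBigO_refl (fun t : ℝ => t ^ 1) _).const_mul_left (2 * m₁))).congr_left
      fun t => by ring
  have hu : (fun t => A t - 1) =O[𝓝 0] (· ^ 1) :=
    (hdiff.add ((isBigO_refl (fun t : ℝ => t ^ 1) _).const_mul_left m₁)).congr_left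
      fun t => by ring
  have hu0 : Tendsto (fun t => A t - 1) (𝓝 0) (𝓝 0) :=
    hu.trans_tendsto (by simpa using (continuous_pow 1).tendsto (0 : ℝ))
  have hlog : (fun t => log (A t) - ((A t - 1) - (A t - 1) ^ 2 / 2)) =O[𝓝 0] (· ^ 3) := by
    refine ((isBigO_log_one_add_sub.comp_tendsto hu0).trans ?_).congr_left fun t => ?_
    · simpa only [Function.comp_def, ← pow_mul, one_mul] using hu.pow 3
    · simp only [Function.comp_apply, add_sub_cancel]
  -- With `u = A - 1`: `log A + L - t²/2 (m₂ - m₁²)` is the sum of `log (1 + u) - (u - u²/2)`,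
  -- the two remainders of `hA` and `hL`, and `-(u + t m₁)(u - t m₁)/2 = O(t²) · O(t)`.
  refine (((hlog.add hA).add hL).sub ((hsum.mul hdiff).const_mul_left (1 / 2) |>.congr_right
    fun t => by ring)).congr_left fun t => by ring

section Mean

variable {α : Type*} [MeasurableSpace α] {μ : Measure α} [IsProbabilityMeasure μ]

theorem integral_quadratic_comp_mul {g : α → ℝ} (hg : Integrable g μ)
    (hg2 : Integrable (fun a => g a ^ 2) μ) (a₀ a₁ a₂ t : ℝ) :
    ∫ a, (a₀ + a₁ * (t * g a) + a₂ * (t * g a) ^ 2) ∂μ =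
      a₀ + a₁ * t * ∫ a, g a ∂μ + a₂ * t ^ 2 * ∫ a, g a ^ 2 ∂μ := by
  have h₁ : Integrable (fun a => a₁ * t * g a) μ := hg.const_mul _
  have h₂ : Integrable (fun a => a₂ * t ^ 2 * g a ^ 2) μ := hg2.const_mul _
  have h₀₁ : Integrable (fun a => a₀ + a₁ * t * g a) μ := (integrable_const a₀).add h₁
  simp_rw [mul_pow, ← mul_assoc]
  rw [integral_add h₀₁ h₂, integral_add (integrable_const a₀) h₁,
    integral_const_mul, integral_const_mul, integral_const, probReal_univ, one_smul]

theorem isBigO_integral_comp_mul_sub {φ : ℝ → ℝ} (hφm : Measurable φ) {a₀ a₁ a₂ : ℝ}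
    (hφ : (fun x => φ x - (a₀ + a₁ * x + a₂ * x ^ 2)) =O[𝓝 0] (· ^ 3))
    {g : α → ℝ} (hg : AEMeasurable g μ) {M : ℝ} (hgM : ∀ᵐ a ∂μ, |g a| ≤ M) :
    (fun t => ∫ a, φ (t * g a) ∂μ -
      (a₀ + a₁ * t * ∫ a, g a ∂μ + a₂ * t ^ 2 * ∫ a, g a ^ 2 ∂μ)) =O[𝓝 0] (· ^ 3) := by
  obtain ⟨K, hK, hKφ⟩ := hφ.exists_pos
  obtain ⟨δ, hδ, hδφ⟩ := Metric.eventually_nhds_iff.1 hKφ.bound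
  have hM : 0 ≤ M := hgM.exists.elim fun a ha => (abs_nonneg _).trans ha
  have hg_int : Integrable g μ :=
    .of_bound hg.aestronglyMeasurable M (by simpa only [norm_eq_abs] using hgM)
  have hg2_int : Integrable (fun a => g a ^ 2) μ :=
    .of_bound (hg.pow_const 2).aestronglyMeasurable (M ^ 2) <| hgM.mono fun a ha => by
      rw [norm_eq_abs, abs_pow]; exact pow_le_pow_left₀ (abs_nonneg _) ha 2
  refine IsBigO.of_bound (K * M ^ 3) ?_
  filter_upwards [Metric.ball_mem_nhds (0 : ℝ) (div_pos hδ (by positivity : (0:ℝ) < M + 1))]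
    with t ht
  rw [Metric.mem_ball, dist_zero_right, norm_eq_abs, lt_div_iff₀ (by positivity)] at ht
  set P : ℝ → ℝ := fun x => a₀ + a₁ * x + a₂ * x ^ 2
  have hrem : ∀ᵐ a ∂μ, ‖φ (t * g a) - P (t * g a)‖ ≤ K * M ^ 3 * ‖t ^ 3‖ := by
    filter_upwards [hgM] with a ha
    have hsmall : |t * g a| ≤ |t| * M := by
      rw [abs_mul]; exact mul_le_mul_of_nonneg_left ha (abs_nonneg t)
    have hδa : dist (t * g a) 0 < δ := by
      rw [dist_zero_right, norm_eq_abs]; nlinarith [abs_nonneg t]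
    calc ‖φ (t * g a) - P (t * g a)‖ ≤ K * |t * g a| ^ 3 := by
          simpa only [norm_pow, norm_eq_abs] using hδφ hδa
      _ ≤ K * (|t| * M) ^ 3 := by gcongr
      _ = K * M ^ 3 * ‖t ^ 3‖ := by rw [norm_pow, norm_eq_abs]; ring
  have hrem_int : Integrable (fun a => φ (t * g a) - P (t * g a)) μ := by
    have htg : AEMeasurable (fun a => t * g a) μ := hg.const_mul t
    refine .of_bound ((hφm.comp_aemeasurable htg).sub ?_).aestronglyMeasurable _ hrem
    fun_prop
  have hP_int : Integrable (fun a => P (t * g a)) μ :=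
    ((integrable_const a₀).add ((hg_int.const_mul t).const_mul a₁)).add
      (((hg2_int.const_mul (t ^ 2)).congr (ae_of_all _ fun a => by simp [mul_pow])).const_mul a₂)
  have hφ_int : Integrable (fun a => φ (t * g a)) μ :=
    (hrem_int.add hP_int).congr (ae_of_all _ fun a => sub_add_cancel _ _)
  rw [← integral_quadratic_comp_mul hg_int hg2_int, ← integral_sub hφ_int hP_int]
  simpa only [probReal_univ, mul_one] using norm_integral_le_of_norm_le_const hrem

theorem isBigO_log_integral_inv_add_integral_log_sub {g : α → ℝ} (hg : AEMeasurable g μ)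
    {M : ℝ} (hgM : ∀ᵐ a ∂μ, |g a| ≤ M) :
    (fun t => log (∫ a, (1 + t * g a)⁻¹ ∂μ) + ∫ a, log (1 + t * g a) ∂μ -
      t ^ 2 / 2 * (∫ a, g a ^ 2 ∂μ - (∫ a, g a ∂μ) ^ 2)) =O[𝓝 0] (· ^ 3) := by
  refine isBigO_log_add_sub_of_isBigO ?_ ?_
  · refine (isBigO_integral_comp_mul_sub (φ := fun x => (1 + x)⁻¹) (a₀ := 1) (a₁ := -1)
      (a₂ := 1) (by fun_prop) (isBigO_inv_one_add_sub.congr_left fun x => by ring) hg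
      hgM).congr_left fun t => by ring
  · refine (isBigO_integral_comp_mul_sub (φ := fun x => log (1 + x)) (a₀ := 0) (a₁ := 1)
      (a₂ := -1 / 2) (by fun_prop) (isBigO_log_one_add_sub.congr_left fun x => by ring) hg
      hgM).congr_left fun t => by ring

end Mean

instance isProbabilityMeasure_cond_Icc_neg_pi_pi : IsProbabilityMeasure volume[|Icc (-π) π] :=
  ProbabilityTheory.cond_isProbabilityMeasure_of_finite (by simp [pi_pos]) (by simp)

theorem integral_cond_Icc_neg_pi_pi (h : ℝ → ℝ) :
    ∫ θ, h θ ∂volume[|Icc (-π) π] = (2 * π)⁻¹ * ∫ θ in Icc (-π) π, h θ := by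
  rw [ProbabilityTheory.cond, integral_smul_measure, smul_eq_mul, Real.volume_Icc,
    ENNReal.toReal_inv, ENNReal.toReal_ofReal (by linarith [pi_pos]), sub_neg_eq_add, ← two_mul]

theorem deltaAG_add_mul_eq {f Δ : ℝ → ℝ} (hf : ∀ᵐ θ ∂volume.restrict (Icc (-π) π), f θ ≠ 0)
    (t : ℝ) :
    deltaAG f (fun θ => f θ + t * Δ θ) =
      log (∫ θ, (1 + t * (Δ θ / f θ))⁻¹ ∂volume[|Icc (-π) π]) +
        ∫ θ, log (1 + t * (Δ θ / f θ)) ∂volume[|Icc (-π) π] := by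
  -- This holds for every `t`: where `1 + t * (Δ θ / f θ) = 0`, both sides are `0`.
  have hratio : ∀ᵐ θ ∂volume.restrict (Icc (-π) π),
      f θ / (f θ + t * Δ θ) = (1 + t * (Δ θ / f θ))⁻¹ :=
    hf.mono fun θ hθ => by rw [← div_mul_cancel_left₀ hθ]; field_simp
  have hmean : ∫ θ in Icc (-π) π, f θ / (f θ + t * Δ θ) =
      ∫ θ in Icc (-π) π, (1 + t * (Δ θ / f θ))⁻¹ := integral_congr_ae hratio
  have hlog : ∫ θ in Icc (-π) π, log (f θ / (f θ + t * Δ θ)) =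
      -∫ θ in Icc (-π) π, log (1 + t * (Δ θ / f θ)) := by
    rw [← integral_neg]
    exact integral_congr_ae (hratio.mono fun θ hθ => by simp only [hθ, log_inv])
  rw [deltaAG, hmean, hlog, integral_cond_Icc_neg_pi_pi, integral_cond_Icc_neg_pi_pi]
  ring

/-- Second-order expansion of `δ_{a/g}`:
`δ_{a/g}(f, f + tΔ) = (t²/2)·Q + O(|t|³)` as `t → 0`, where
`Q = (1/2π)∫ (Δ/f)² dθ − ((1/2π)∫ Δ/f dθ)²`. -/
theorem deltaAG_quadratic_expansion (f Δ : ℝ → ℝ) (c C : ℝ) (hc : 0 < c)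
    (hmf : Measurable f) (hmΔ : Measurable Δ)
    (hf : ∀ᵐ θ ∂(volume.restrict (Icc (-π) π)), c ≤ f θ ∧ f θ ≤ C)
    (hΔ : ∀ᵐ θ ∂(volume.restrict (Icc (-π) π)), |Δ θ| ≤ C) :
    ∃ K > (0 : ℝ), ∃ t0 > (0 : ℝ), ∀ t : ℝ, |t| ≤ t0 →
      |deltaAG f (fun θ => f θ + t * Δ θ) -
          t ^ 2 / 2 * (((2 * π)⁻¹ * ∫ θ in Icc (-π) π, (Δ θ / f θ) ^ 2) -
            ((2 * π)⁻¹ * ∫ θ in Icc (-π) π, Δ θ / f θ) ^ 2)| ≤ K * |t| ^ 3 := by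
  have hf_ne : ∀ᵐ θ ∂volume.restrict (Icc (-π) π), f θ ≠ 0 :=
    hf.mono fun θ hθ => (hc.trans_le hθ.1).ne'
  have hg_bound : ∀ᵐ θ ∂volume[|Icc (-π) π], |Δ θ / f θ| ≤ C / c := by
    refine Measure.ae_smul_measure ?_ _
    filter_upwards [hf, hΔ] with θ hfθ hΔθ
    rw [abs_div, abs_of_pos (hc.trans_le hfθ.1)]
    exact div_le_div₀ ((abs_nonneg _).trans hΔθ) hΔθ hc hfθ.1
  have hg : AEMeasurable (fun θ => Δ θ / f θ) volume[|Icc (-π) π] := (hmΔ.div hmf).aemeasurable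
  refine exists_abs_le_mul_pow_of_isBigO
    ((isBigO_log_integral_inv_add_integral_log_sub hg hg_bound).congr_left fun t => ?_)
  simp only [deltaAG_add_mul_eq hf_ne, ← integral_cond_Icc_neg_pi_pi]
end
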